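/- arXiv:2412.05942 — 7 statements merged into one kernel-verified Lean document; each statement's English description precedes it below -/
import Mathlib

section
/- Let n, M ≥ 1 be integers and let θ be an n×n matrix with nonnegative real entries. Then ⟨perm(θ↑P_M)⟩ = Σ_{k ∈ K(M,n)} (∏_{i,j} θ(i,j)^{k(i,j)}) · C_{B,M,n}(k), with the convention 0^0 = 1. -/
open scoped BigOperators

noncomputable section

/-- The permanent of a real square matrix: `perm(A) = Σ_{σ} ∏_i A(i, σ(i))`. -/
def perm' {α : Type*} [Fintype α] [DecidableEq α] (A : Matrix α α ℝ) : ℝ :=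
  ∑ σ : Equiv.Perm α, ∏ i, A i (σ i)

/-- `k ∈ K(M,n)`: a nonnegative-integer `n×n` matrix all of whose row sums and
column sums equal `M`. -/
def isDS (M n : ℕ) (k : Matrix (Fin n) (Fin n) ℕ) : Prop :=
  (∀ i, ∑ j, k i j = M) ∧ (∀ j, ∑ i, k i j = M)

/-- `C_{B,M,n}(k) = (M!)^{2n} · (∏_{i,j} (M−k(i,j))!) / ((M!)^{n²} · ∏_{i,j} k(i,j)!)`. -/
def CB (M n : ℕ) (k : Matrix (Fin n) (Fin n) ℕ) : ℝ :=
  ((M.factorial : ℝ) ^ (2 * n) * ∏ i, ∏ j, ((M - k i j).factorial : ℝ)) /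
    ((M.factorial : ℝ) ^ (n ^ 2) * ∏ i, ∏ j, ((k i j).factorial : ℝ))

/-- The `P_M`-lifting `θ↑P_M`: the `nM×nM` matrix with entries
`(θ↑P_M)((i,m),(j,m')) = θ(i,j)·P^{(i,j)}(m,m')`. -/
def liftMat {n M : ℕ} (θ : Matrix (Fin n) (Fin n) ℝ)
    (P : Fin n → Fin n → Equiv.Perm (Fin M)) :
    Matrix (Fin n × Fin M) (Fin n × Fin M) ℝ :=
  Matrix.of fun p q => θ p.1 q.1 * (if P p.1 q.1 p.2 = q.2 then 1 else 0)

/-- `⟨perm(θ↑P_M)⟩`: the arithmetic average of `perm(θ↑P_M)` over all `(M!)^{n²}`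
collections `P_M` of `n²` permutation matrices of size `M×M`. -/
def avgLiftPerm (n M : ℕ) (θ : Matrix (Fin n) (Fin n) ℝ) : ℝ :=
  (∑ P : Fin n → Fin n → Equiv.Perm (Fin M), perm' (liftMat θ P)) /
    (Fintype.card (Fin n → Fin n → Equiv.Perm (Fin M)) : ℝ)

/-! Expanding the permanent,
`∑_P perm(θ↑P) = ∑_σ (∏ θ(i,j)^{k(i,j)}) · #{P compatible with σ}`,
where `σ` runs over the permutations of `[n] × [M]` and `k(i,j) = #{m | σ(i,m) ∈ {j} × [M]}`
is the profile of `σ`, a matrix in `K(M,n)`. A family `P` is compatible with `σ` iff every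
`P^{(i,j)}` extends an injective partial map prescribed by `σ` on `k(i,j)` points, which leaves
`∏ (M - k(i,j))!` families. A permutation with profile `k` is a colouring `(i,m) ↦ (σ(i,m)).1`
with row profile `k` (`∏_i M!/∏_j k(i,j)!` choices) followed by a bijection onto each of the `n`
blocks `{j} × [M]` (`M!^n` choices): there are `M!^{2n}/∏ k(i,j)!` of them, and dividing by the
`M!^{n²}` families `P` gives `C_{B,M,n}(k)`.
-/

open Finset
open scoped Nat

section Counting

variable {α α' β : Type*} [Fintype α] [Fintype α'] [Fintype β]
  [DecidableEq α] [DecidableEq α'] [DecidableEq β]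

theorem card_equiv_comp_eq_prod_factorial (c : α → β) (d : α' → β)
    (h : ∀ b, Fintype.card {a // c a = b} = Fintype.card {a' // d a' = b}) :
    Fintype.card {e : α ≃ α' // d ∘ e = c} = ∏ b, (Fintype.card {a // c a = b})! := by
  let e₀ : α ≃ α' := Equiv.ofFiberEquiv fun b => Fintype.equivOfCardEq (h b)
  have hc : d ∘ e₀ = c := funext (Equiv.ofFiberEquiv_map _)
  -- `e ↦ e₀⁻¹ ∘ e` identifies these equivalences with the permutations of `α` preserving `c`
  rw [← DomMulAct.stabilizer_card c]
  refine Fintype.card_congr (((Equiv.refl α).equivCongr e₀.symm).subtypeEquiv fun e => ?_)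
  rw [← hc]
  simp [funext_iff]

theorem card_fun_fiber_card_eq_mul_prod_factorial (v : β → ℕ)
    (hv : ∑ b, v b = Fintype.card α) :
    Fintype.card {f : α → β // ∀ b, Fintype.card {a // f a = b} = v b} * ∏ b, (v b)! =
      (Fintype.card α)! := by
  obtain ⟨e⟩ : Nonempty (α ≃ Σ b, Fin (v b)) := ⟨Fintype.equivOfCardEq (by simp [hv])⟩
  set d : α → β := fun a => (e a).1
  have hd (b : β) : Fintype.card {a // d a = b} = v b := by
    rw [Fintype.card_congr ((e.subtypeEquiv fun a => Iff.rfl).trans (Equiv.sigmaSubtype b)),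
      Fintype.card_fin]
  have hfiber (f : α → β) (hf : ∀ b, Fintype.card {a // f a = b} = v b) :
      #{σ : Equiv.Perm α | d ∘ σ = f} = ∏ b, (v b)! := by
    rw [← Fintype.card_subtype, card_equiv_comp_eq_prod_factorial f d (by simp [hf, hd])]
    simp [hf]
  have hmaps (σ : Equiv.Perm α) (b : β) : Fintype.card {a // (d ∘ σ) a = b} = v b :=
    (Fintype.card_congr (σ.subtypeEquiv fun _ => Iff.rfl)).trans (hd b)
  rw [Fintype.card_subtype, ← Fintype.card_perm, ← card_univ (α := Equiv.Perm α),
    card_eq_sum_card_fiberwise (f := fun σ : Equiv.Perm α => d ∘ σ)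
      (t := {f | ∀ b, Fintype.card {a // f a = b} = v b}) fun σ _ => by simpa using hmaps σ,
    sum_congr rfl fun f hf => hfiber f (by simpa using hf), sum_const, smul_eq_mul]

theorem card_perm_eqOn_finset (S : Finset α) (τ : α → α) (hτ : Set.InjOn τ S) :
    Fintype.card {q : Equiv.Perm α // ∀ a ∈ S, q a = τ a} = (Fintype.card α - #S)! := by
  classical
  let e₀ : (S : Set α) ≃ (τ '' S : Set α) := Equiv.Set.imageOfInjOn τ S hτ
  have hS : Fintype.card ((S : Set α)ᶜ : Set α) = Fintype.card α - #S := by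
    rw [Fintype.card_compl_set]; simp
  have hτS : Fintype.card ((τ '' S : Set α)ᶜ : Set α) = Fintype.card α - #S := by
    rw [Fintype.card_compl_set, ← Fintype.card_congr e₀]; simp
  rw [← hS, ← Fintype.card_equiv (Fintype.equivOfCardEq (hS.trans hτS.symm))]
  refine Fintype.card_congr ((Equiv.subtypeEquivRight fun q => ?_).trans (Equiv.Set.compl e₀))
  exact ⟨fun h a => h a a.2, fun h a ha => h ⟨a, ha⟩⟩

end Counting

section Profile

variable {ι κ β : Type*} [Fintype κ] [DecidableEq β]

def profile (c : ι × κ → β) : Matrix ι β ℕ :=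
  Matrix.of fun i b => Fintype.card {k // c (i, k) = b}

theorem sum_profile_row [Fintype β] (c : ι × κ → β) (i : ι) :
    ∑ b, profile c i b = Fintype.card κ := by
  simp only [profile, Matrix.of_apply, ← Fintype.card_sigma]
  exact Fintype.card_congr (Equiv.sigmaFiberEquiv _)

theorem sum_profile_col [Fintype ι] (c : ι × κ → β) (b : β) :
    ∑ i, profile c i b = Fintype.card {p // c p = b} := by
  simp only [profile, Matrix.of_apply, ← Fintype.card_sigma]
  exact Fintype.card_congr
    { toFun := fun x => ⟨(x.1, x.2.1), x.2.2⟩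
      invFun := fun y => ⟨y.1.1, y.1.2, y.2⟩
      left_inv := fun _ => rfl
      right_inv := fun _ => rfl }

theorem prod_comp_eq_prod_pow_profile [Fintype ι] [Fintype β] {R : Type*} [CommMonoid R]
    (c : ι × κ → β) (f : ι → β → R) :
    ∏ p, f p.1 (c p) = ∏ i, ∏ b, f i b ^ profile c i b := by
  rw [Fintype.prod_prod_type]
  refine prod_congr rfl fun i _ => ?_
  rw [← prod_fiberwise univ (fun k => c (i, k))]
  refine prod_congr rfl fun b _ => ?_
  rw [prod_congr rfl (g := fun _ => f i b) fun k hk => by rw [(mem_filter.1 hk).2], prod_const,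
    profile, Matrix.of_apply, Fintype.card_subtype]

theorem card_profile_eq_mul_prod_factorial [Fintype ι] [Fintype β] [DecidableEq ι]
    [DecidableEq κ] (k : Matrix ι β ℕ) (hk : ∀ i, ∑ b, k i b = Fintype.card κ) :
    Fintype.card {c : ι × κ → β // profile c = k} * ∏ i, ∏ b, (k i b)! =
      (Fintype.card κ)! ^ Fintype.card ι := by
  let e : {c : ι × κ → β // profile c = k} ≃
      ∀ i, {f : κ → β // ∀ b, Fintype.card {x // f x = b} = k i b} :=
    ((Equiv.curry ι κ β).subtypeEquiv fun _ => Matrix.ext_iff.symm).trans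
      Equiv.subtypePiEquivPi
  rw [Fintype.card_congr e, Fintype.card_pi, ← prod_mul_distrib,
    prod_congr rfl fun i _ => card_fun_fiber_card_eq_mul_prod_factorial (k i) (hk i),
    prod_const, card_univ]

end Profile

section LiftedPermanent

variable {n M : ℕ}

theorem card_subtype_fst_eq (j : Fin n) : Fintype.card {p : Fin n × Fin M // p.1 = j} = M :=
  (Fintype.card_congr
    { toFun := fun p => p.1.2
      invFun := fun m => ⟨(j, m), rfl⟩
      left_inv := by rintro ⟨⟨_, _⟩, rfl⟩; rfl
      right_inv := fun _ => rfl }).trans (Fintype.card_fin M)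

theorem isDS_profile_fst_comp (σ : Equiv.Perm (Fin n × Fin M)) :
    isDS M n (profile (Prod.fst ∘ σ)) := by
  refine ⟨fun i => by simpa using sum_profile_row (Prod.fst ∘ σ) i, fun j => ?_⟩
  rw [sum_profile_col]
  exact (Fintype.card_congr (σ.subtypeEquiv fun _ => Iff.rfl)).trans (card_subtype_fst_eq j)

theorem card_perm_profile_eq_mul_prod_factorial (k : Matrix (Fin n) (Fin n) ℕ)
    (hk : isDS M n k) :
    Fintype.card {σ : Equiv.Perm (Fin n × Fin M) // profile (Prod.fst ∘ σ) = k} *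
      ∏ i, ∏ j, (k i j)! = M ! ^ (2 * n) := by
  have hfiber (c : {c : Fin n × Fin M → Fin n // profile c = k}) :
      Fintype.card {σ : Equiv.Perm (Fin n × Fin M) // Prod.fst ∘ σ = c} = M ! ^ n := by
    obtain ⟨c, hc⟩ := c
    have hcol (j : Fin n) : Fintype.card {p // c p = j} =
        Fintype.card {p : Fin n × Fin M // p.1 = j} := by
      rw [← sum_profile_col, hc, hk.2 j, card_subtype_fst_eq]
    rw [card_equiv_comp_eq_prod_factorial c Prod.fst hcol]
    simp [hcol, card_subtype_fst_eq]
  have hsplit := Fintype.card_congr (Equiv.sigmaSubtypeFiberEquivSubtype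
    (fun σ : Equiv.Perm (Fin n × Fin M) => Prod.fst ∘ ⇑σ)
    (p := fun σ => profile (Prod.fst ∘ ⇑σ) = k) (q := fun c => profile c = k)
    fun _ => Iff.rfl)
  rw [← hsplit, Fintype.card_sigma, sum_congr rfl fun c _ => hfiber c, sum_const, smul_eq_mul,
    card_univ, mul_right_comm, card_profile_eq_mul_prod_factorial k (by simpa using hk.1)]
  simp [two_mul, pow_add]

theorem perm'_liftMat (θ : Matrix (Fin n) (Fin n) ℝ)
    (P : Fin n → Fin n → Equiv.Perm (Fin M)) :
    perm' (liftMat θ P) = ∑ σ : Equiv.Perm (Fin n × Fin M),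
      (∏ p, θ p.1 (σ p).1) * if ∀ p, P p.1 (σ p).1 p.2 = (σ p).2 then 1 else 0 := by
  refine sum_congr rfl fun σ _ => ?_
  simp only [liftMat, Matrix.of_apply, prod_mul_distrib, Fintype.prod_boole]

theorem card_perm_family_compatible (σ : Equiv.Perm (Fin n × Fin M)) :
    Fintype.card {P : Fin n → Fin n → Equiv.Perm (Fin M) //
        ∀ p, P p.1 (σ p).1 p.2 = (σ p).2} =
      ∏ i, ∏ j, (M - profile (Prod.fst ∘ σ) i j)! := by
  let S (i j : Fin n) : Finset (Fin M) := {m | (σ (i, m)).1 = j}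
  have hinj (i j : Fin n) : Set.InjOn (fun m => (σ (i, m)).2) (S i j) := by
    intro m hm m' hm' h
    have h1 : (σ (i, m)).1 = (σ (i, m')).1 := (mem_filter.1 hm).2.trans (mem_filter.1 hm').2.symm
    simpa using σ.injective (Prod.ext h1 h)
  let e : {P : Fin n → Fin n → Equiv.Perm (Fin M) // ∀ p, P p.1 (σ p).1 p.2 = (σ p).2} ≃
      ∀ i j, {q : Equiv.Perm (Fin M) // ∀ m ∈ S i j, q m = (σ (i, m)).2} :=
    (Equiv.subtypeEquivRight fun P =>
      ⟨fun h i j m hm => (mem_filter.1 hm).2 ▸ h (i, m),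
        fun h (p : Fin n × Fin M) => h p.1 _ p.2 (mem_filter.2 ⟨mem_univ _, rfl⟩)⟩).trans
      (Equiv.subtypePiEquivPi.trans (Equiv.piCongrRight fun _ => Equiv.subtypePiEquivPi))
  rw [Fintype.card_congr e, Fintype.card_pi]
  refine prod_congr rfl fun i _ => ?_
  rw [Fintype.card_pi]
  refine prod_congr rfl fun j _ => ?_
  convert card_perm_eqOn_finset _ _ (hinj i j) using 2
  simp [S, profile, Fintype.card_subtype]

theorem sum_perm'_liftMat (θ : Matrix (Fin n) (Fin n) ℝ) :
    ∑ P : Fin n → Fin n → Equiv.Perm (Fin M), perm' (liftMat θ P) =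
      ∑ σ : Equiv.Perm (Fin n × Fin M), (∏ i, ∏ j, θ i j ^ profile (Prod.fst ∘ σ) i j) *
        ∏ i, ∏ j, ((M - profile (Prod.fst ∘ σ) i j)! : ℝ) := by
  simp only [perm'_liftMat]
  rw [sum_comm]
  refine sum_congr rfl fun σ _ => ?_
  rw [← mul_sum, sum_boole, ← Fintype.card_subtype, card_perm_family_compatible,
    ← prod_comp_eq_prod_pow_profile (Prod.fst ∘ σ) θ]
  push_cast
  rfl

theorem coe_image_profile :
    (univ.image fun σ : Equiv.Perm (Fin n × Fin M) => profile (Prod.fst ∘ σ) :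
      Set (Matrix (Fin n) (Fin n) ℕ)) = {k | isDS M n k} := by
  ext k
  simp only [coe_image, coe_univ, Set.image_univ, Set.mem_range, Set.mem_ofPred_eq]
  refine ⟨fun ⟨σ, hσ⟩ => hσ ▸ isDS_profile_fst_comp σ, fun hk => ?_⟩
  have hne :
      Fintype.card {σ : Equiv.Perm (Fin n × Fin M) // profile (Prod.fst ∘ σ) = k} ≠ 0 :=
    fun h => (pow_pos M.factorial_pos _).ne
      (by simpa [h] using card_perm_profile_eq_mul_prod_factorial k hk)
  obtain ⟨σ, hσ⟩ := Fintype.card_pos_iff.1 (Nat.pos_of_ne_zero hne)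
  exact ⟨σ, hσ⟩

theorem sum_perm_eq_sum_image_profile (w : Matrix (Fin n) (Fin n) ℕ → ℝ) :
    ∑ σ : Equiv.Perm (Fin n × Fin M), w (profile (Prod.fst ∘ σ)) =
      ∑ k ∈ univ.image (fun σ : Equiv.Perm (Fin n × Fin M) => profile (Prod.fst ∘ σ)),
        (M ! ^ (2 * n) / ∏ i, ∏ j, ((k i j)! : ℝ)) * w k := by
  refine (sum_fiberwise_of_maps_to' (fun σ _ => mem_image_of_mem _ (mem_univ σ)) w).symm.trans
    (sum_congr rfl fun k hk => ?_)
  obtain ⟨σ, -, rfl⟩ := mem_image.1 hk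
  have hcount : (Fintype.card {τ : Equiv.Perm (Fin n × Fin M) //
      profile (Prod.fst ∘ τ) = profile (Prod.fst ∘ σ)} : ℝ) =
      M ! ^ (2 * n) / ∏ i, ∏ j, ((profile (Prod.fst ∘ σ) i j)! : ℝ) :=
    (eq_div_iff (by positivity)).2 (by
      exact_mod_cast card_perm_profile_eq_mul_prod_factorial _ (isDS_profile_fst_comp σ))
  rw [sum_const, nsmul_eq_mul, ← Fintype.card_subtype, hcount]

end LiftedPermanent

theorem statement_1_general (n M : ℕ) (θ : Matrix (Fin n) (Fin n) ℝ) :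
    avgLiftPerm n M θ =
      ∑ᶠ (k : Matrix (Fin n) (Fin n) ℕ) (_ : isDS M n k),
        (∏ i, ∏ j, θ i j ^ k i j) * CB M n k := by
  have hfinsum : (∑ᶠ (k : Matrix (Fin n) (Fin n) ℕ) (_ : isDS M n k),
      (∏ i, ∏ j, θ i j ^ k i j) * CB M n k) =
        ∑ k ∈ univ.image (fun σ : Equiv.Perm (Fin n × Fin M) => profile (Prod.fst ∘ σ)),
          (∏ i, ∏ j, θ i j ^ k i j) * CB M n k := by
    rw [← finsum_mem_coe_finset, coe_image_profile]
    rfl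
  have hcard : (Fintype.card (Fin n → Fin n → Equiv.Perm (Fin M)) : ℝ) = M ! ^ (n ^ 2) := by
    simp [Fintype.card_perm, sq, pow_mul]
  rw [hfinsum, avgLiftPerm, sum_perm'_liftMat, sum_perm_eq_sum_image_profile
    (fun k => (∏ i, ∏ j, θ i j ^ k i j) * ∏ i, ∏ j, ((M - k i j)! : ℝ)), hcard, sum_div]
  refine sum_congr rfl fun k _ => ?_
  rw [CB]
  ring

/-- For integers `n, M ≥ 1` and a nonnegative real `n×n` matrix `θ`,
`⟨perm(θ↑P_M)⟩ = Σ_{k ∈ K(M,n)} (∏_{i,j} θ(i,j)^{k(i,j)}) · C_{B,M,n}(k)`. -/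
theorem statement_1 (n M : ℕ) (hn : 1 ≤ n) (hM : 1 ≤ M)
    (θ : Matrix (Fin n) (Fin n) ℝ) (hθ : ∀ i j, 0 ≤ θ i j) :
    avgLiftPerm n M θ =
      ∑ᶠ (k : Matrix (Fin n) (Fin n) ℕ) (_ : isDS M n k),
        (∏ i, ∏ j, θ i j ^ k i j) * CB M n k :=
  statement_1_general n M θ
end
end

section
/- Let n, M ≥ 1 be integers and let θ be an n×n matrix with nonnegative real entries. Then perm(θ ⊗ U_{M,M}) = Σ_{k ∈ K(M,n)} (∏_{i,j} θ(i,j)^{k(i,j)}) · C_{scS,M,n}(k), with the convention 0^0 = 1. -/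
open scoped BigOperators

noncomputable section

/-- `C_{scS,M,n}(k) = (M!)^{2n} / (M^{nM} · ∏_{i,j} k(i,j)!)`. -/
def CscS (M n : ℕ) (k : Matrix (Fin n) (Fin n) ℕ) : ℝ :=
  (M.factorial : ℝ) ^ (2 * n) / ((M : ℝ) ^ (n * M) * ∏ i, ∏ j, ((k i j).factorial : ℝ))

/-!
Expanding the permanent, a permutation `σ` of `Fin n × Fin M` contributes
`M^{-nM} ∏ θ(i,j)^{k(i,j)}`, where `k(i,j)` counts the `a` with `σ(i,a)` in block `j`. Group the
permutations by their block map `t = Prod.fst ∘ σ`: over each `t` all of whose fibres have size `M`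
there are `(M!)^n` of them, and none over any other `t`. Then group block maps by `k`: the `i`-th
row `a ↦ t(i,a)` is a function `Fin M → Fin n` with fibre sizes `k(i,·)`, and there are
`M!/∏_j k(i,j)!` of those. Both counts come from counting bijections that commute with given maps
to a common base, one fibre at a time. Together with `M^{-nM}`, the two counts multiply to
`C_{scS,M,n}(k)`.
-/

open Finset
open scoped Nat

variable {α β γ ι : Type*}

def Equiv.subtypeOverEquivPiFiber (f : α → γ) (g : β → γ) :
    {e : α ≃ β // ∀ a, g (e a) = f a} ≃ ∀ c, ({a // f a = c} ≃ {b // g b = c}) where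
  toFun e c := e.1.subtypeEquiv fun a => by rw [e.2 a]
  invFun e := ⟨Equiv.ofFiberEquiv e, Equiv.ofFiberEquiv_map e⟩
  left_inv e := rfl
  right_inv e := by
    funext c
    ext ⟨a, rfl⟩
    rfl

theorem card_equiv_eq_ite [Finite α] [Finite β] :
    Nat.card (α ≃ β) = if Nat.card α = Nat.card β then (Nat.card α)! else 0 := by
  split_ifs with h
  · obtain ⟨e⟩ := Finite.card_eq.mp h
    have := Fintype.ofFinite α
    have := Fintype.ofFinite β
    classical
    rw [Nat.card_eq_fintype_card, Fintype.card_equiv e, Nat.card_eq_fintype_card]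
  · have : IsEmpty (α ≃ β) := ⟨fun e => h (Nat.card_congr e)⟩
    exact Nat.card_of_isEmpty

theorem card_equiv_over [Finite α] [Finite β] [Fintype γ] (f : α → γ) (g : β → γ) :
    Nat.card {e : α ≃ β // ∀ a, g (e a) = f a} =
      if ∀ c, Nat.card {a // f a = c} = Nat.card {b // g b = c}
      then ∏ c, (Nat.card {a // f a = c})! else 0 := by
  rw [Nat.card_congr (Equiv.subtypeOverEquivPiFiber f g), Nat.card_pi, ← Fintype.prod_ite_zero]
  exact prod_congr rfl fun c _ => card_equiv_eq_ite

theorem sum_eq_finsum_card_fiber_smul {X Y M : Type*} [Fintype X] [AddCommMonoid M]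
    (Φ : X → Y) (G : Y → M) :
    ∑ x, G (Φ x) = ∑ᶠ y, Nat.card {x // Φ x = y} • G y := by
  classical
  rw [finsum_eq_finsetSum_of_support_subset (s := univ.image Φ), Finset.sum_comp]
  · refine sum_congr rfl fun y _ => ?_
    rw [Nat.card_eq_fintype_card, Fintype.card_subtype]
  · intro y hy
    by_contra hyΦ
    have : IsEmpty {x // Φ x = y} := ⟨fun x => hyΦ (by simp [← x.2])⟩
    simp at hy

theorem card_fun_fiber_card_eq_mul_prod_factorial_s2 [Fintype α] [Fintype ι] (c : ι → ℕ) :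
    Nat.card {f : α → ι // ∀ j, Nat.card {a // f a = j} = c j} * ∏ j, (c j)! =
      if ∑ j, c j = Nat.card α then (Nat.card α)! else 0 := by
  classical
  have hfst (j : ι) : Nat.card {b : Σ j, Fin (c j) // b.1 = j} = c j := by
    rw [Nat.card_congr (Equiv.sigmaSubtype j), Nat.card_fin]
  have hover (f : α → ι) : Nat.card {e : α ≃ Σ j, Fin (c j) // ∀ a, (e a).1 = f a} =
      if ∀ j, Nat.card {a // f a = j} = c j then ∏ j, (c j)! else 0 := by
    rw [card_equiv_over f Sigma.fst]
    simp only [hfst]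
    split_ifs with h
    · simp only [h]
    · rfl
  -- Count the bijections `α ≃ Σ j, Fin (c j)` by the map `α → ι` they induce.
  calc _ = ∑ f : α → ι, Nat.card {e : α ≃ Σ j, Fin (c j) // ∀ a, (e a).1 = f a} := by
        rw [Fintype.sum_congr _ _ hover, ← sum_filter, sum_const, smul_eq_mul,
          Nat.card_eq_fintype_card, Fintype.card_subtype]
    _ = Nat.card (α ≃ Σ j, Fin (c j)) := by
        rw [← Nat.card_congr (Equiv.sigmaFiberEquiv fun e : α ≃ Σ j, Fin (c j) => Sigma.fst ∘ e),
          Nat.card_sigma]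
        exact Fintype.sum_congr _ _ fun f =>
          Nat.card_congr (Equiv.subtypeEquivRight fun e => funext_iff.symm)
    _ = _ := by simp only [card_equiv_eq_ite, Nat.card_sigma, Nat.card_fin, eq_comm]

def blockCount (t : α × β → γ) : Matrix α γ ℕ := fun i j => Nat.card {b // t (i, b) = j}

theorem card_fiber_eq_sum_blockCount [Fintype α] [Finite β] (t : α × β → γ) (j : γ) :
    Nat.card {x // t x = j} = ∑ i, blockCount t i j := by
  rw [show ∑ i, blockCount t i j = ∑ i, Nat.card {b // t (i, b) = j} from rfl, ← Nat.card_sigma]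
  exact Nat.card_congr
    { toFun x := ⟨x.1.1, x.1.2, x.2⟩
      invFun s := ⟨(s.1, s.2.1), s.2.2⟩ }

theorem prod_eq_prod_pow_blockCount {R : Type*} [CommMonoid R] [Fintype α] [Fintype β]
    [Fintype γ] (θ : α → γ → R) (t : α × β → γ) :
    ∏ x, θ x.1 (t x) = ∏ i, ∏ j, θ i j ^ blockCount t i j := by
  classical
  rw [Fintype.prod_prod_type]
  refine prod_congr rfl fun i _ => ?_
  rw [← Fintype.prod_fiberwise' (fun b => t (i, b)) (θ i)]
  simp [blockCount, Nat.card_eq_fintype_card]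

theorem card_blockCount_eq_mul_prod_factorial [Fintype α] [Fintype β] [Fintype γ]
    (k : Matrix α γ ℕ) :
    Nat.card {t : α × β → γ // blockCount t = k} * ∏ i, ∏ j, (k i j)! =
      if ∀ i, ∑ j, k i j = Nat.card β then (Nat.card β)! ^ Nat.card α else 0 := by
  have hcurry : {t : α × β → γ // blockCount t = k} ≃
      ∀ i, {f : β → γ // ∀ j, Nat.card {b // f b = j} = k i j} :=
    { toFun t i := ⟨fun b => t.1 (i, b), fun j => congrFun (congrFun t.2 i) j⟩
      invFun f := ⟨fun x => (f x.1).1 x.2, funext fun i => funext (f i).2⟩ }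
  rw [Nat.card_congr hcurry, Nat.card_pi, ← prod_mul_distrib,
    Fintype.prod_congr _ _ fun i => card_fun_fiber_card_eq_mul_prod_factorial_s2 (k i),
    Fintype.prod_ite_zero, prod_const, card_univ, Fintype.card_eq_nat_card]

theorem card_perm_fst_eq_ite [Fintype α] [Fintype β] (t : α × β → α) :
    Nat.card {σ : Equiv.Perm (α × β) // ∀ x, (σ x).1 = t x} =
      if ∀ j, ∑ i, blockCount t i j = Nat.card β then (Nat.card β)! ^ Nat.card α else 0 := by
  have hfst (j : α) : Nat.card {x : α × β // x.1 = j} = Nat.card β := by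
    rw [Nat.card_congr (Equiv.prodSubtypeFstEquivSubtypeProd (p := (· = j))), Nat.card_prod,
      Nat.card_unique, one_mul]
  rw [card_equiv_over t Prod.fst]
  simp only [hfst, card_fiber_eq_sum_blockCount]
  split_ifs with h
  · simp [h, prod_const, Nat.card_eq_fintype_card]
  · rfl

theorem perm'_kroneckerMap_const [Fintype α] [Fintype β] [DecidableEq α] [DecidableEq β]
    (θ : Matrix α α ℝ) (r : ℝ) :
    perm' (Matrix.kroneckerMap (· * ·) θ (Matrix.of fun _ _ : β => r)) =
      ∑ σ : Equiv.Perm (α × β), ∏ x, θ x.1 (σ x).1 * r :=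
  rfl

theorem perm'_kroneckerMap_const_eq_finsum [Fintype α] [Fintype β] [DecidableEq α]
    [DecidableEq β] (θ : Matrix α α ℝ) (r : ℝ) :
    perm' (Matrix.kroneckerMap (· * ·) θ (Matrix.of fun _ _ : β => r)) =
      ∑ᶠ k : Matrix α α ℕ, Nat.card {t : α × β → α // blockCount t = k} •
        (if ∀ j, ∑ i, k i j = Nat.card β then (Nat.card β)! ^ Nat.card α else 0) •
          (r ^ (Nat.card α * Nat.card β) * ∏ i, ∏ j, θ i j ^ k i j) := by
  have hweight (t : α × β → α) :
      ∏ x, θ x.1 (t x) * r =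
        r ^ (Nat.card α * Nat.card β) * ∏ i, ∏ j, θ i j ^ blockCount t i j := by
    simp only [prod_mul_distrib, prod_const, prod_eq_prod_pow_blockCount θ, card_univ,
      Fintype.card_eq_nat_card, Nat.card_prod, mul_comm]
  calc perm' (Matrix.kroneckerMap (· * ·) θ (Matrix.of fun _ _ : β => r))
      = ∑ᶠ t : α × β → α, Nat.card {σ : Equiv.Perm (α × β) // (fun x => (σ x).1) = t} •
          ∏ x, θ x.1 (t x) * r :=
        (perm'_kroneckerMap_const θ r).trans <|
          sum_eq_finsum_card_fiber_smul (fun (σ : Equiv.Perm (α × β)) x => (σ x).1)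
            fun t => ∏ x, θ x.1 (t x) * r
    _ = ∑ t : α × β → α, (if ∀ j, ∑ i, blockCount t i j = Nat.card β
          then (Nat.card β)! ^ Nat.card α else 0) •
            (r ^ (Nat.card α * Nat.card β) * ∏ i, ∏ j, θ i j ^ blockCount t i j) := by
        rw [finsum_eq_sum_of_fintype]
        refine Fintype.sum_congr _ _ fun t => ?_
        rw [hweight, ← card_perm_fst_eq_ite]
        congr 1
        exact Nat.card_congr (Equiv.subtypeEquivRight fun σ => funext_iff)
    _ = _ := sum_eq_finsum_card_fiber_smul blockCount fun k : Matrix α α ℕ =>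
          (if ∀ j, ∑ i, k i j = Nat.card β then (Nat.card β)! ^ Nat.card α else 0) •
            (r ^ (Nat.card α * Nat.card β) * ∏ i, ∏ j, θ i j ^ k i j)

theorem card_blockCount_smul_eq_ite_CscS (n M : ℕ) (θ : Matrix (Fin n) (Fin n) ℝ)
    (k : Matrix (Fin n) (Fin n) ℕ) [Decidable (isDS M n k)] :
    Nat.card {t : Fin n × Fin M → Fin n // blockCount t = k} •
        (if ∀ j, ∑ i, k i j = M then M ! ^ n else 0) •
          ((1 / (M : ℝ)) ^ (n * M) * ∏ i, ∏ j, θ i j ^ k i j) =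
      if isDS M n k then (∏ i, ∏ j, θ i j ^ k i j) * CscS M n k else 0 := by
  have hP : 0 < ∏ i, ∏ j, (k i j)! := by positivity
  have hA := card_blockCount_eq_mul_prod_factorial (β := Fin M) k
  simp only [Nat.card_fin] at hA
  by_cases hrow : ∀ i, ∑ j, k i j = M
  · rw [if_pos hrow] at hA
    by_cases hcol : ∀ j, ∑ i, k i j = M
    · have hDS : isDS M n k := ⟨hrow, hcol⟩
      simp only [hcol, implies_true, hDS, ↓reduceIte, CscS]
      have hA' : (Nat.card {t : Fin n × Fin M → Fin n // blockCount t = k} : ℝ) =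
          M ! ^ n / ∏ i, ∏ j, ((k i j)! : ℝ) := by
        rw [eq_div_iff (by positivity)]
        exact_mod_cast hA
      rw [nsmul_eq_mul, nsmul_eq_mul, hA']
      push_cast
      ring
    · have hDS : ¬isDS M n k := fun h => hcol h.2
      simp only [hcol, hDS, ↓reduceIte, zero_smul, smul_zero]
  · have hDS : ¬isDS M n k := fun h => hrow h.1
    simp only [hrow, ↓reduceIte, mul_eq_zero, hP.ne', or_false] at hA
    simp only [hA, hDS, ↓reduceIte, zero_smul]

theorem statement_2_general (n M : ℕ)
    (θ : Matrix (Fin n) (Fin n) ℝ) :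
    perm' (Matrix.kroneckerMap (· * ·) θ (Matrix.of fun _ _ : Fin M => 1 / (M : ℝ))) =
      ∑ᶠ (k : Matrix (Fin n) (Fin n) ℕ) (_ : isDS M n k),
        (∏ i, ∏ j, θ i j ^ k i j) * CscS M n k := by
  classical
  rw [perm'_kroneckerMap_const_eq_finsum]
  simp only [Nat.card_fin]
  exact finsum_congr fun k => (card_blockCount_smul_eq_ite_CscS n M θ k).trans finsum_eq_if.symm

/-- For integers `n, M ≥ 1` and a nonnegative real `n×n` matrix `θ`,
`perm(θ ⊗ U_{M,M}) = Σ_{k ∈ K(M,n)} (∏_{i,j} θ(i,j)^{k(i,j)}) · C_{scS,M,n}(k)`,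
where `U_{M,M}` is the `M×M` matrix with all entries `1/M`. -/
theorem statement_2 (n M : ℕ) (hn : 1 ≤ n) (hM : 1 ≤ M)
    (θ : Matrix (Fin n) (Fin n) ℝ) (hθ : ∀ i j, 0 ≤ θ i j) :
    perm' (Matrix.kroneckerMap (· * ·) θ (Matrix.of fun _ _ : Fin M => 1 / (M : ℝ))) =
      ∑ᶠ (k : Matrix (Fin n) (Fin n) ℕ) (_ : isDS M n k),
        (∏ i, ∏ j, θ i j ^ k i j) * CscS M n k :=
  statement_2_general n M θ

end
end

section
/- Let n ≥ 1 and M ≥ 2 be integers and let k ∈ K(M,n). Let R = {i ∈ [n] : ∃ j with 0 < k(i,j) < M} and C = {j ∈ [n] : ∃ i with 0 < k(i,j) < M}; these two sets have equal cardinality, and for every i ∈ R and j ∈ C one has k(i,j) < M. Define Q(k) := 1 if R is empty, and otherwise Q(k) := ( Σ_{τ} ∏_{i∈R} (k(i,τ(i))/M)·(1 − k(i,τ(i))/M) ) / ( ∏_{(i,j)∈R×C} (1 − k(i,j)/M) ), where the sum is over all bijections τ : R → C. Then Σ_{σ} C_{B,M−1,n}(k − P_σ) = Q(k) · C_{B,M,n}(k),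 where the sum is over all permutations σ ∈ S_n such that k(i,σ(i)) ≥ 1 for all i. -/
open scoped BigOperators

noncomputable section

/-- The permutation matrix `P_σ` with entries `P_σ(i,j) = 1` iff `σ(i) = j`. -/
def permMat {n : ℕ} (σ : Equiv.Perm (Fin n)) : Matrix (Fin n) (Fin n) ℕ :=
  Matrix.of fun i j => if σ i = j then 1 else 0

/-- The set `R` of row indices where `k` has an entry strictly between `0` and `M`. -/
def Rset (M n : ℕ) (k : Matrix (Fin n) (Fin n) ℕ) : Finset (Fin n) :=
  @Finset.filter _ (fun i => ∃ j, 0 < k i j ∧ k i j < M) (fun _ => inferInstance) Finset.univ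

/-- The set `C` of column indices where `k` has an entry strictly between `0` and `M`. -/
def Cset (M n : ℕ) (k : Matrix (Fin n) (Fin n) ℕ) : Finset (Fin n) :=
  Finset.univ.filter (fun j => ∃ i, 0 < k i j ∧ k i j < M)

/-- `Q(k)`: equal to `1` when `R` is empty, and otherwise to
`(Σ_{τ : R ≃ C} ∏_{i∈R} (k(i,τ(i))/M)·(1 − k(i,τ(i))/M)) / (∏_{(i,j)∈R×C} (1 − k(i,j)/M))`,
where the sum is over all bijections `τ : R → C`. -/
def Qcoef (M n : ℕ) (k : Matrix (Fin n) (Fin n) ℕ) : ℝ :=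
  if Rset M n k = ∅ then 1
  else
    (∑ τ : {i // i ∈ Rset M n k} ≃ {j // j ∈ Cset M n k},
        ∏ i : {i // i ∈ Rset M n k},
          ((k i.1 (τ i).1 : ℝ) / M) * (1 - (k i.1 (τ i).1 : ℝ) / M)) /
      ∏ i ∈ Rset M n k, ∏ j ∈ Cset M n k, (1 - (k i j : ℝ) / M)

/-!
Both sides are products of row weights: `C_{B,M,n}(k)` is the product over the rows `v` of
`(M!)² ∏_j (M - v_j)! / (M! v_j!)`. Subtracting `P_σ` for an admissible `σ` multiplies row `i` by
`(k(i,σ i)/M) ∏_{j ≠ σ i} (1 - k(i,j)/M)⁻¹`. A row outside `R` is `M` times a unit vector, so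
its factor is `1`; a row of `R` has no entry `M` and vanishes outside `C`, so its factor is
`k(i,σ i)/M · (1 - k(i,σ i)/M) / ∏_{j ∈ C} (1 - k(i,j)/M)`. Finally an admissible `σ` is forced
outside `R` and restricts to a bijection `R ≃ C`, and every such bijection with nonzero weight
extends uniquely.
-/

open Finset
open scoped Matrix Nat

namespace Equiv

variable {α : Type*} {p q : α → Prop} [DecidablePred p] [DecidablePred q]
  (e : {x // p x} ≃ {x // q x}) (f : {x // ¬p x} ≃ {x // ¬q x})

theorem subtypeCongr_apply_of_pos {a : α} (h : p a) : e.subtypeCongr f a = e ⟨a, h⟩ := by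
  simp [subtypeCongr, sumCompl, h]

theorem subtypeCongr_apply_of_neg {a : α} (h : ¬p a) : e.subtypeCongr f a = f ⟨a, h⟩ := by
  simp [subtypeCongr, sumCompl, h]

end Equiv

section SumEq

variable {ι : Type*} [Fintype ι] {v : ι → ℕ} {M : ℕ} {j j' : ι}

theorem le_of_sum_eq (hv : ∑ j, v j = M) (j : ι) : v j ≤ M :=
  hv ▸ single_le_sum (fun _ _ => Nat.zero_le _) (mem_univ j)

theorem add_le_of_sum_eq (hv : ∑ j, v j = M) (h : j ≠ j') : v j + v j' ≤ M := by
  classical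
  rw [← hv, ← sum_pair h]
  exact sum_le_sum_of_subset (subset_univ _)

theorem eq_of_sum_eq_of_eq (hv : ∑ j, v j = M) (hj : v j = M) (hj' : 0 < v j') : j' = j := by
  by_contra h
  have := add_le_of_sum_eq hv h
  omega

end SumEq

section Structure

variable {n M : ℕ} {k : Matrix (Fin n) (Fin n) ℕ} {i j : Fin n}

theorem mem_Rset : i ∈ Rset M n k ↔ ∃ j, 0 < k i j ∧ k i j < M := by
  simp [Rset]

theorem Cset_eq_Rset_transpose : Cset M n k = Rset M n kᵀ := by
  unfold Rset Cset
  congr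

theorem notMem_Rset_of_eq (hrow : ∑ j, k i j = M) (hj : k i j = M) : i ∉ Rset M n k := by
  intro hi
  obtain ⟨j', hpos, hlt⟩ := mem_Rset.1 hi
  rw [eq_of_sum_eq_of_eq hrow hj hpos, hj] at hlt
  exact lt_irrefl M hlt

theorem lt_of_mem_Rset (hrow : ∑ j, k i j = M) (hi : i ∈ Rset M n k) (j : Fin n) : k i j < M :=
  (le_of_sum_eq hrow j).lt_of_ne fun h => notMem_Rset_of_eq hrow h hi

theorem mem_Rset_iff_lt (hrow : ∑ j, k i j = M) (hpos : 0 < k i j) :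
    i ∈ Rset M n k ↔ k i j < M :=
  ⟨fun hi => lt_of_mem_Rset hrow hi j, fun hlt => mem_Rset.2 ⟨j, hpos, hlt⟩⟩

theorem exists_eq_of_notMem_Rset (hrow : ∑ j, k i j = M) (hM : 0 < M) (hi : i ∉ Rset M n k) :
    ∃ j, k i j = M := by
  obtain ⟨j, hj⟩ : ∃ j, 0 < k i j := by
    by_contra! h
    simp only [Nat.le_zero.mp (h _), sum_const_zero] at hrow
    omega
  exact ⟨j, (le_of_sum_eq hrow j).eq_of_not_lt fun hlt => hi ((mem_Rset_iff_lt hrow hj).2 hlt)⟩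

theorem notMem_Cset_of_eq (hcol : ∑ i, k i j = M) (h : k i j = M) : j ∉ Cset M n k :=
  Cset_eq_Rset_transpose (k := k) ▸ notMem_Rset_of_eq (k := kᵀ) hcol h

theorem mem_Cset_iff_lt (hcol : ∑ i, k i j = M) (hpos : 0 < k i j) :
    j ∈ Cset M n k ↔ k i j < M :=
  Cset_eq_Rset_transpose (k := k) ▸ mem_Rset_iff_lt (k := kᵀ) hcol hpos

theorem exists_eq_of_notMem_Cset (hcol : ∑ i, k i j = M) (hM : 0 < M) (hj : j ∉ Cset M n k) :
    ∃ i, k i j = M :=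
  exists_eq_of_notMem_Rset (k := kᵀ) hcol hM (Cset_eq_Rset_transpose (k := k) ▸ hj)

theorem isDS.mem_Rset_iff_mem_Cset (hk : isDS M n k) (hpos : 0 < k i j) :
    i ∈ Rset M n k ↔ j ∈ Cset M n k :=
  (mem_Rset_iff_lt (hk.1 i) hpos).trans (mem_Cset_iff_lt (hk.2 j) hpos).symm

end Structure

namespace isDS

variable {n M : ℕ} {k : Matrix (Fin n) (Fin n) ℕ}

theorem exists_bijective_compl (hk : isDS M n k) (hM : 0 < M) :
    ∃ f : {i // i ∉ Rset M n k} → {j // j ∉ Cset M n k},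
      Function.Bijective f ∧ ∀ i, k i.1 (f i).1 = M := by
  choose f hf using fun i : {i // i ∉ Rset M n k} => exists_eq_of_notMem_Rset (hk.1 i) hM i.2
  refine ⟨fun i : {i // i ∉ Rset M n k} => ⟨f i, notMem_Cset_of_eq (hk.2 _) (hf i)⟩, ⟨?_, ?_⟩, hf⟩
  · intro i i' h
    have hfi : f i = f i' := congrArg Subtype.val h
    have hpos : 0 < k i' (f i) := by rw [hfi, hf i']; exact hM
    exact Subtype.ext (eq_of_sum_eq_of_eq (v := fun i => k i _) (hk.2 _) (hf i) hpos).symm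
  · intro j
    obtain ⟨i, hi⟩ := exists_eq_of_notMem_Cset (hk.2 j) hM j.2
    have hi' : i ∉ Rset M n k := notMem_Rset_of_eq (hk.1 i) hi
    have hpos : 0 < k i j := by rw [hi]; exact hM
    exact ⟨⟨i, hi'⟩, Subtype.ext (eq_of_sum_eq_of_eq (hk.1 i) (hf ⟨i, hi'⟩) hpos).symm⟩

def complEquiv (hk : isDS M n k) (hM : 0 < M) : {i // i ∉ Rset M n k} ≃ {j // j ∉ Cset M n k} :=
  Equiv.ofBijective _ (hk.exists_bijective_compl hM).choose_spec.1

theorem apply_complEquiv (hk : isDS M n k) (hM : 0 < M) (i : {i // i ∉ Rset M n k}) :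
    k i (hk.complEquiv hM i) = M :=
  (hk.exists_bijective_compl hM).choose_spec.2 i

theorem card_Rset_eq_card_Cset (hk : isDS M n k) (hM : 0 < M) :
    (Rset M n k).card = (Cset M n k).card := by
  have h := Fintype.card_congr (hk.complEquiv hM)
  rw [Fintype.card_subtype_compl, Fintype.card_subtype_compl, Fintype.card_coe,
    Fintype.card_coe] at h
  have := card_le_univ (Rset M n k)
  have := card_le_univ (Cset M n k)
  omega

end isDS

def entryWeight (M a : ℕ) : ℝ := ((M - a)! : ℝ) / (M ! * a !)

def rowWeight {ι : Type*} [Fintype ι] (M : ℕ) (v : ι → ℕ) : ℝ :=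
  (M ! : ℝ) ^ 2 * ∏ j, entryWeight M (v j)

theorem CB_eq_prod_rowWeight (M n : ℕ) (k : Matrix (Fin n) (Fin n) ℕ) :
    CB M n k = ∏ i, rowWeight M (k i) := by
  simp only [CB, rowWeight, entryWeight, prod_mul_distrib, prod_div_distrib, prod_const,
    card_univ, Fintype.card_fin]
  ring

theorem entryWeight_pred_pred {M a : ℕ} (ha₀ : 0 < a) (ha : a ≤ M) :
    entryWeight (M - 1) (a - 1) = M * a * entryWeight M a := by
  obtain ⟨b, rfl⟩ := Nat.exists_eq_add_of_lt ha₀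
  obtain ⟨m, rfl⟩ := Nat.exists_eq_add_of_le ha
  simp only [entryWeight, Nat.add_sub_cancel, zero_add, Nat.factorial_succ]
  rw [show b + 1 + m - 1 = b + m by omega, show b + m - b = m by omega,
    show b + 1 + m = (b + m) + 1 by omega, show b + m + 1 - (b + 1) = m by omega,
    Nat.factorial_succ (b + m)]
  push_cast
  field_simp

theorem entryWeight_pred {M a : ℕ} (ha : a < M) :
    entryWeight (M - 1) a = (1 - a / M : ℝ)⁻¹ * entryWeight M a := by
  obtain ⟨m, rfl⟩ := Nat.exists_eq_add_of_lt ha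
  have hm : (a + m + 1 : ℝ) ≠ 0 := by positivity
  simp only [entryWeight]
  rw [show a + m + 1 - 1 = a + m by omega, show a + m - a = m by omega,
    show a + m + 1 - a = m + 1 by omega, Nat.factorial_succ (a + m), Nat.factorial_succ m]
  push_cast
  rw [one_sub_div hm, inv_div, show (a + m + 1 - a : ℝ) = m + 1 by ring]
  field_simp

def bernoulliVar (M a : ℕ) : ℝ := a / M * (1 - a / M)

section RowWeight

variable {ι : Type*} [Fintype ι] [DecidableEq ι] {v : ι → ℕ} {M : ℕ} {j₀ : ι}

def rowRatio (M : ℕ) (v : ι → ℕ) (j₀ : ι) : ℝ :=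
  v j₀ / M * ∏ j ∈ univ.erase j₀, (1 - v j / M : ℝ)⁻¹

theorem rowWeight_pred_sub_single (hv : ∑ j, v j = M) (h₀ : 0 < v j₀) :
    rowWeight (M - 1) (v - Pi.single j₀ 1) = rowRatio M v j₀ * rowWeight M v := by
  have hM : 0 < M := h₀.trans_le (le_of_sum_eq hv j₀)
  have hlt : ∀ j ∈ univ.erase j₀, v j < M := fun j hj => by
    have := add_le_of_sum_eq hv (mem_erase.1 hj).1
    omega
  have hpivot : entryWeight (M - 1) ((v - Pi.single j₀ 1 : ι → ℕ) j₀) =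
      M * v j₀ * entryWeight M (v j₀) := by
    simpa using entryWeight_pred_pred h₀ (le_of_sum_eq hv j₀)
  have hrest : ∀ j ∈ univ.erase j₀, entryWeight (M - 1) ((v - Pi.single j₀ 1 : ι → ℕ) j) =
      (1 - v j / M : ℝ)⁻¹ * entryWeight M (v j) := fun j hj => by
    simpa [Pi.single_apply, (mem_erase.1 hj).1] using entryWeight_pred (hlt j hj)
  have hfac : (M ! : ℝ) = M * (M - 1)! := by
    rw [← Nat.cast_mul, Nat.mul_factorial_pred hM.ne']
  unfold rowWeight rowRatio
  rw [← mul_prod_erase univ _ (mem_univ j₀), ← mul_prod_erase univ _ (mem_univ j₀), hpivot,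
    prod_congr rfl hrest, prod_mul_distrib, hfac]
  field_simp

theorem rowRatio_eq_one (hv : ∑ j, v j = M) (h₀ : v j₀ = M) (hM : 0 < M) :
    rowRatio M v j₀ = 1 := by
  have hzero : ∀ j ∈ univ.erase j₀, v j = 0 := fun j hj =>
    Nat.eq_zero_of_not_pos fun hpos => (mem_erase.1 hj).1 (eq_of_sum_eq_of_eq hv h₀ hpos)
  rw [rowRatio, prod_eq_one fun j hj => by simp [hzero j hj], h₀, mul_one, div_self]
  positivity

theorem rowRatio_eq_div (hlt : ∀ j, v j < M) :
    rowRatio M v j₀ = bernoulliVar M (v j₀) / ∏ j, (1 - v j / M : ℝ) := by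
  have hne : ∀ j, (1 - v j / M : ℝ) ≠ 0 := fun j => by
    have : (v j : ℝ) < M := by exact_mod_cast hlt j
    exact sub_ne_zero.2 (div_ne_one_of_ne this.ne).symm
  rw [rowRatio, bernoulliVar, ← mul_prod_erase univ _ (mem_univ j₀), prod_inv_distrib]
  field_simp [hne j₀]

end RowWeight

namespace isDS

variable {n M : ℕ} {k : Matrix (Fin n) (Fin n) ℕ}

theorem prod_one_sub_eq_prod_Cset (hk : isDS M n k) {i : Fin n} (hi : i ∈ Rset M n k) :
    ∏ j, (1 - k i j / M : ℝ) = ∏ j ∈ Cset M n k, (1 - k i j / M : ℝ) := by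
  refine (prod_subset (subset_univ _) fun j _ hj => ?_).symm
  have : k i j = 0 := Nat.eq_zero_of_not_pos fun hpos => hj ((hk.mem_Rset_iff_mem_Cset hpos).1 hi)
  simp [this]

theorem CB_pred_sub_permMat (hk : isDS M n k) {σ : Equiv.Perm (Fin n)}
    (hσ : ∀ i, 1 ≤ k i (σ i)) :
    CB (M - 1) n (k - permMat σ) =
      (∏ i ∈ Rset M n k, bernoulliVar M (k i (σ i))) /
        (∏ i ∈ Rset M n k, ∏ j ∈ Cset M n k, (1 - k i j / M : ℝ)) * CB M n k := by
  have hrow : ∀ i, (k - permMat σ) i = k i - Pi.single (σ i) 1 := fun i => by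
    funext j
    simp [permMat, Pi.single_apply, eq_comm]
  simp only [CB_eq_prod_rowWeight, hrow, rowWeight_pred_sub_single (hk.1 _) (hσ _),
    prod_mul_distrib]
  congr 1
  have houtside : ∀ i ∈ (Rset M n k)ᶜ, rowRatio M (k i) (σ i) = 1 := fun i hi => by
    have hlt := mt (mem_Rset_iff_lt (hk.1 i) (hσ i)).2 (mem_compl.1 hi)
    exact rowRatio_eq_one (hk.1 i) (le_antisymm (le_of_sum_eq (hk.1 i) _) (not_lt.1 hlt))
      (lt_of_lt_of_le (hσ i) (le_of_sum_eq (hk.1 i) _))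
  rw [← prod_mul_prod_compl (Rset M n k), prod_eq_one houtside, mul_one, ← prod_div_distrib]
  refine prod_congr rfl fun i hi => ?_
  rw [rowRatio_eq_div (lt_of_mem_Rset (hk.1 i) hi), hk.prod_one_sub_eq_prod_Cset hi]

theorem sum_admissible_eq_sum_equiv (hk : isDS M n k) (hM : 0 < M) (g : Fin n → Fin n → ℝ)
    (hg : ∀ i j, g i j ≠ 0 → 0 < k i j) :
    ∑ σ ∈ univ.filter (fun σ : Equiv.Perm (Fin n) => ∀ i, 1 ≤ k i (σ i)),
        ∏ i ∈ Rset M n k, g i (σ i) =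
      ∑ τ : {i // i ∈ Rset M n k} ≃ {j // j ∈ Cset M n k},
        ∏ i : {i // i ∈ Rset M n k}, g i (τ i) := by
  classical
  set e := hk.complEquiv hM
  symm
  refine sum_bij_ne_zero (fun τ _ _ => τ.subtypeCongr e) ?_ ?_ ?_ ?_
  · intro τ _ hτ
    refine mem_filter.2 ⟨mem_univ _, fun i => ?_⟩
    by_cases hi : i ∈ Rset M n k
    · rw [Equiv.subtypeCongr_apply_of_pos _ _ hi]
      exact hg _ _ (prod_ne_zero_iff.1 hτ ⟨i, hi⟩ (mem_univ _))
    · rw [Equiv.subtypeCongr_apply_of_neg _ _ hi, hk.apply_complEquiv hM ⟨i, hi⟩]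
      exact hM
  · intro τ₁ _ _ τ₂ _ _ h
    refine Equiv.ext fun i => ?_
    simpa [Equiv.subtypeCongr_apply_of_pos _ _ i.2] using congrArg (· i.1) h
  · intro σ hσ hne
    have hσ' := (mem_filter.1 hσ).2
    refine ⟨σ.subtypeEquiv fun i => hk.mem_Rset_iff_mem_Cset (hσ' i), mem_univ _, ?_, ?_⟩
    · rwa [← prod_coe_sort] at hne
    · refine Equiv.ext fun i => ?_
      by_cases hi : i ∈ Rset M n k
      · simp [Equiv.subtypeCongr_apply_of_pos _ _ hi]
      · rw [Equiv.subtypeCongr_apply_of_neg _ _ hi]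
        exact (eq_of_sum_eq_of_eq (hk.1 i) (hk.apply_complEquiv hM ⟨i, hi⟩) (hσ' i)).symm
  · intro τ _ _
    refine (prod_congr rfl fun i _ => ?_).trans (prod_coe_sort (Rset M n k) _)
    rw [Equiv.subtypeCongr_apply_of_pos _ _ i.2]

end isDS

theorem Qcoef_eq {n M : ℕ} {k : Matrix (Fin n) (Fin n) ℕ}
    (hcard : (Rset M n k).card = (Cset M n k).card) :
    Qcoef M n k =
      (∑ τ : {i // i ∈ Rset M n k} ≃ {j // j ∈ Cset M n k},
          ∏ i : {i // i ∈ Rset M n k}, bernoulliVar M (k i (τ i))) /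
        ∏ i ∈ Rset M n k, ∏ j ∈ Cset M n k, (1 - k i j / M : ℝ) := by
  unfold Qcoef
  split_ifs with hR
  · have hC : Cset M n k = ∅ := card_eq_zero.1 (hcard ▸ hR ▸ card_empty)
    have : IsEmpty {i // i ∈ Rset M n k} := isEmpty_coe_sort.2 hR
    have : IsEmpty {j // j ∈ Cset M n k} := isEmpty_coe_sort.2 hC
    rw [sum_congr rfl fun τ _ => Fintype.prod_empty _, sum_const, card_univ,
      Fintype.card_equiv (Equiv.equivOfIsEmpty _ _), hR]
    simp
  · rfl

theorem statement_8_general (n M : ℕ) (hM : 2 ≤ M)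
    (k : Matrix (Fin n) (Fin n) ℕ) (hk : isDS M n k) :
    (Rset M n k).card = (Cset M n k).card ∧
    (∀ i ∈ Rset M n k, ∀ j ∈ Cset M n k, k i j < M) ∧
    (∑ σ ∈ Finset.univ.filter (fun σ : Equiv.Perm (Fin n) => ∀ i, 1 ≤ k i (σ i)),
        CB (M - 1) n (k - permMat σ)) = Qcoef M n k * CB M n k := by
  have hM₀ : 0 < M := by omega
  have hcard := hk.card_Rset_eq_card_Cset hM₀
  refine ⟨hcard, fun i hi j _ => lt_of_mem_Rset (hk.1 i) hi j, ?_⟩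
  have hvar : ∀ i j, bernoulliVar M (k i j) ≠ 0 → 0 < k i j := fun i j hne =>
    Nat.pos_of_ne_zero fun h => hne (by simp [bernoulliVar, h])
  rw [sum_congr rfl fun σ hσ => hk.CB_pred_sub_permMat (mem_filter.1 hσ).2, ← sum_mul, ← sum_div,
    hk.sum_admissible_eq_sum_equiv hM₀ _ hvar, Qcoef_eq hcard]

/-- For `n ≥ 1`, `M ≥ 2` and `k ∈ K(M,n)`: the sets `R` and `C` have equal
cardinality, every entry `k(i,j)` with `i ∈ R`, `j ∈ C` satisfies `k(i,j) < M`, and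
`Σ_σ C_{B,M−1,n}(k − P_σ) = Q(k) · C_{B,M,n}(k)`, the sum over permutations `σ` with
`k(i,σ(i)) ≥ 1` for all `i`. -/
theorem statement_8 (n M : ℕ) (hn : 1 ≤ n) (hM : 2 ≤ M)
    (k : Matrix (Fin n) (Fin n) ℕ) (hk : isDS M n k) :
    (Rset M n k).card = (Cset M n k).card ∧
    (∀ i ∈ Rset M n k, ∀ j ∈ Cset M n k, k i j < M) ∧
    (∑ σ ∈ Finset.univ.filter (fun σ : Equiv.Perm (Fin n) => ∀ i, 1 ≤ k i (σ i)),
        CB (M - 1) n (k - permMat σ)) = Qcoef M n k * CB M n k :=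
  statement_8_general n M hM k hk
end
end

section
/- Let n ≥ 1 and M ≥ 2 be integers and let k ∈ K(M,n). Then Σ_{σ} C_{scS,M−1,n}(k − P_σ) = (M/(M−1))^{n(M−1)} · perm((1/M)·k) · C_{scS,M,n}(k), where the sum is over all permutations σ ∈ S_n such that k(i,σ(i)) ≥ 1 for all i, and (1/M)·k denotes the doubly stochastic real matrix with entries k(i,j)/M. -/
open scoped BigOperators

noncomputable section

/-! Subtracting `P_σ` lowers exactly one entry in each row by one, so
`C_{scS,M-1,n}(k - P_σ) = C_{scS,M-1,n}(k) · ∏ᵢ k(i,σ(i))`, and summing over `σ` gives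
`C_{scS,M-1,n}(k) · perm(k)`. Since `(M!)² = M² ((M-1)!)²`, the prefactor
`(M/(M-1))^{n(M-1)} · M^{-n}` turns `C_{scS,M,n}(k)` into `C_{scS,M-1,n}(k)`. -/

lemma prod_factorial_sub_single_mul {ι : Type*} [Fintype ι] [DecidableEq ι] (v : ι → ℕ)
    (a : ι) (ha : 1 ≤ v a) :
    (∏ j, ((v - (Pi.single a 1 : ι → ℕ)) j).factorial) * v a = ∏ j, (v j).factorial := by
  have h_off : ∀ j ∈ Finset.univ.erase a,
      ((v - (Pi.single a 1 : ι → ℕ)) j).factorial = (v j).factorial :=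
    fun j hj => by simp [Pi.single_eq_of_ne (Finset.ne_of_mem_erase hj)]
  rw [← Finset.mul_prod_erase _ _ (Finset.mem_univ a),
    ← Finset.mul_prod_erase _ _ (Finset.mem_univ a), Finset.prod_congr rfl h_off,
    mul_right_comm, Pi.sub_apply, Pi.single_eq_same, mul_comm _ (v a),
    Nat.mul_factorial_pred (by omega)]

lemma sub_permMat_row {n : ℕ} (k : Matrix (Fin n) (Fin n) ℕ) (σ : Equiv.Perm (Fin n))
    (i : Fin n) : (k - permMat σ) i = k i - Pi.single (σ i) 1 := by
  funext j
  simp [permMat, Pi.single_apply, eq_comm]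

lemma CscS_sub_permMat (m n : ℕ) (k : Matrix (Fin n) (Fin n) ℕ) (σ : Equiv.Perm (Fin n))
    (hσ : ∀ i, 1 ≤ k i (σ i)) :
    CscS m n (k - permMat σ) = CscS m n k * ∏ i, (k i (σ i) : ℝ) := by
  have h_fact : (∏ i, ∏ j, (((k - permMat σ) i j).factorial : ℝ)) * ∏ i, (k i (σ i) : ℝ) =
      ∏ i, ∏ j, ((k i j).factorial : ℝ) := by
    rw [← Finset.prod_mul_distrib]
    refine Finset.prod_congr rfl fun i _ => ?_
    rw [sub_permMat_row]
    exact_mod_cast prod_factorial_sub_single_mul (k i) (σ i) (hσ i)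
  have h_pos : 0 < ∏ i, (k i (σ i) : ℝ) :=
    Finset.prod_pos fun i _ => by exact_mod_cast hσ i
  rw [CscS, CscS, ← h_fact]
  field_simp

lemma sum_filter_prod_eq_perm' {α : Type*} [Fintype α] [DecidableEq α] (A : Matrix α α ℕ)
    [DecidablePred fun σ : Equiv.Perm α => ∀ i, 1 ≤ A i (σ i)] :
    ∑ σ ∈ Finset.univ.filter (fun σ : Equiv.Perm α => ∀ i, 1 ≤ A i (σ i)),
        ∏ i, (A i (σ i) : ℝ) =
      perm' (Matrix.of fun i j => (A i j : ℝ)) := by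
  refine Finset.sum_filter_of_ne fun σ _ h_ne i => ?_
  by_contra h
  exact h_ne (Finset.prod_eq_zero (Finset.mem_univ i) (by simp [Nat.lt_one_iff.mp (not_le.mp h)]))

lemma perm'_of_div {α : Type*} [Fintype α] [DecidableEq α] (A : α → α → ℝ) (c : ℝ) :
    perm' (Matrix.of fun i j => A i j / c) = perm' (Matrix.of A) / c ^ Fintype.card α := by
  simp only [perm', Matrix.of_apply, Finset.prod_div_distrib, Finset.prod_const,
    Finset.card_univ, Finset.sum_div]

lemma CscS_sub_one (M n : ℕ) (hM : 1 ≤ M) (k : Matrix (Fin n) (Fin n) ℕ) :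
    CscS (M - 1) n k = ((M : ℝ) / ((M : ℝ) - 1)) ^ (n * (M - 1)) * CscS M n k / (M : ℝ) ^ n := by
  obtain ⟨m, rfl⟩ : ∃ m, M = m + 1 := ⟨M - 1, by omega⟩
  rcases Nat.eq_zero_or_pos m with rfl | hm
  · simp [CscS]
  have : (m : ℝ) ≠ 0 := by positivity
  simp only [CscS, Nat.add_sub_cancel, Nat.cast_add, Nat.cast_one, add_sub_cancel_right,
    Nat.factorial_succ, Nat.cast_mul, mul_add, pow_add, div_pow, mul_pow]
  field_simp
  ring

theorem statement_9_general (n M : ℕ) (hM : 2 ≤ M)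
    (k : Matrix (Fin n) (Fin n) ℕ) :
    (∑ σ ∈ Finset.univ.filter (fun σ : Equiv.Perm (Fin n) => ∀ i, 1 ≤ k i (σ i)),
        CscS (M - 1) n (k - permMat σ)) =
      ((M : ℝ) / ((M : ℝ) - 1)) ^ (n * (M - 1)) *
        perm' (Matrix.of fun i j => (k i j : ℝ) / M) * CscS M n k := by
  calc _ = ∑ σ ∈ Finset.univ.filter (fun σ : Equiv.Perm (Fin n) => ∀ i, 1 ≤ k i (σ i)),
        CscS (M - 1) n k * ∏ i, (k i (σ i) : ℝ) :=
        Finset.sum_congr rfl fun σ hσ => CscS_sub_permMat _ n k σ (Finset.mem_filter.mp hσ).2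
    _ = CscS (M - 1) n k * perm' (Matrix.of fun i j => (k i j : ℝ)) := by
      rw [← Finset.mul_sum, sum_filter_prod_eq_perm' k]
    _ = _ := by
      rw [perm'_of_div, Fintype.card_fin, CscS_sub_one M n (by omega)]
      ring

/-- For `n ≥ 1`, `M ≥ 2` and `k ∈ K(M,n)`:
`Σ_σ C_{scS,M−1,n}(k − P_σ) = (M/(M−1))^{n(M−1)} · perm((1/M)·k) · C_{scS,M,n}(k)`,
the sum over permutations `σ` with `k(i,σ(i)) ≥ 1` for all `i`, where `(1/M)·k` is the
doubly stochastic real matrix with entries `k(i,j)/M`. -/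
theorem statement_9 (n M : ℕ) (hn : 1 ≤ n) (hM : 2 ≤ M)
    (k : Matrix (Fin n) (Fin n) ℕ) (hk : isDS M n k) :
    (∑ σ ∈ Finset.univ.filter (fun σ : Equiv.Perm (Fin n) => ∀ i, 1 ≤ k i (σ i)),
        CscS (M - 1) n (k - permMat σ)) =
      ((M : ℝ) / ((M : ℝ) - 1)) ^ (n * (M - 1)) *
        perm' (Matrix.of fun i j => (k i j : ℝ) / M) * CscS M n k :=
  statement_9_general n M hM k
end
end

section
/- Fix integers n, N ≥ 1 and k ∈ K(N,n), and let γ(i,j) = k(i,j)/N. Then lim_{t→∞} log(C_{B,tN,n}(t·k)) / (tN) = H_B(γ), where t ranges over positive integers, t·k is the entrywise multiple (so t·k ∈ K(tN,n)), and H_B(γ) = −Σ_{i,j} γ(i,j)·log γ(i,j) + Σ_{i,j} (1−γ(i,j))·log(1−γ(i,j)) (convention 0·log 0 = 0; log denotes the natural logarithm). -/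
/-!
By Stirling, `log m! = m log m - m + o(m)`. Every factorial in `C_{B,tN,n}(t·k)` is `(t a)!` with
`a` among `N`, `N - k(i,j)`, `k(i,j)`, and `log (t a)! = t a (log t - 1) + t a log a + o(t)`.
Because the rows of `k` sum to `N`, the multiplicities `2n - n²`, `1`, `-1` of these factorials
weigh the `a`'s to zero, so the `t log t` and `t` terms cancel and `log C / t` tends to
`(2n - n²) N log N + Σ (N - k) log (N - k) - Σ k log k = N · H_B(γ)`.
-/

open scoped BigOperators

noncomputable section

open Real Filter Topology
open scoped Nat

theorem tendsto_log_factorial_sub_div :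
    Tendsto (fun m : ℕ => (log m ! - (m * log m - m)) / m) atTop (𝓝 0) := by
  -- the numerator is `log (stirlingSeq m) + log (2 m) / 2`
  have h_seq : Tendsto (fun m : ℕ => log (Stirling.stirlingSeq m) / m) atTop (𝓝 0) := by
    have hlog := ((continuousAt_log (by positivity)).tendsto).comp
      Stirling.tendsto_stirlingSeq_sqrt_pi
    simpa using hlog.div_atTop tendsto_natCast_atTop_atTop
  have h_sqrt : Tendsto (fun m : ℕ => log (2 * m) / (2 * m)) atTop (𝓝 0) :=
    isLittleO_log_id_atTop.tendsto_div_nhds_zero.comp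
      (tendsto_natCast_atTop_atTop.const_mul_atTop two_pos)
  have h := h_seq.add h_sqrt
  rw [add_zero] at h
  refine h.congr' ?_
  filter_upwards [eventually_ne_atTop 0] with m hm
  have hm' : (m : ℝ) ≠ 0 := Nat.cast_ne_zero.mpr hm
  rw [Stirling.log_stirlingSeq_formula, log_div hm' (exp_ne_zero 1), log_exp]
  field_simp
  ring

/-- Since `log (t a)! = t a (log t - 1) + t · scaledLogFactorial a t`, and the first term is
linear in `a`, it cancels from every combination `∑ c_ℓ log (t a_ℓ)!` with `∑ c_ℓ a_ℓ = 0`. -/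
def scaledLogFactorial (a t : ℕ) : ℝ :=
  (log (t * a)! - t * a * (log t - 1)) / t

theorem log_factorial_mul {t : ℕ} (ht : t ≠ 0) (a : ℕ) :
    log (t * a)! = t * (log t - 1) * a + t * scaledLogFactorial a t := by
  have ht' : (t : ℝ) ≠ 0 := Nat.cast_ne_zero.mpr ht
  unfold scaledLogFactorial
  field_simp
  ring

theorem tendsto_scaledLogFactorial (a : ℕ) :
    Tendsto (scaledLogFactorial a) atTop (𝓝 (a * log a)) := by
  rcases Nat.eq_zero_or_pos a with rfl | ha
  · have h_zero : scaledLogFactorial 0 = fun _ => 0 := by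
      funext t
      simp [scaledLogFactorial]
    simp [h_zero]
  have hta : Tendsto (fun t : ℕ => t * a) atTop atTop :=
    tendsto_id.atTop_mul_const' ha
  have h := (tendsto_log_factorial_sub_div.comp hta).const_mul (a : ℝ) |>.const_add (a * log a)
  rw [mul_zero, add_zero] at h
  refine h.congr' ?_
  filter_upwards [eventually_ne_atTop 0] with t ht
  have ht' : (t : ℝ) ≠ 0 := Nat.cast_ne_zero.mpr ht
  have ha' : (a : ℝ) ≠ 0 := Nat.cast_ne_zero.mpr ha.ne'
  simp only [Function.comp_apply, scaledLogFactorial]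
  push_cast
  rw [log_mul ht' ha']
  field_simp
  ring

theorem log_prod_prod_factorial {ι κ : Type*} (s : Finset ι) (t : Finset κ) (f : ι → κ → ℕ) :
    log (∏ i ∈ s, ∏ j ∈ t, ((f i j)! : ℝ)) = ∑ i ∈ s, ∑ j ∈ t, log (f i j)! := by
  rw [log_prod fun i _ => by positivity]
  exact Finset.sum_congr rfl fun i _ => log_prod fun j _ => by positivity

theorem log_CB (M n : ℕ) (k : Matrix (Fin n) (Fin n) ℕ) :
    log (CB M n k) = (2 * n - n ^ 2 : ℝ) * log M ! +
      ∑ i, ∑ j, log (M - k i j)! - ∑ i, ∑ j, log (k i j)! := by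
  unfold CB
  rw [log_div (by positivity) (by positivity), log_mul (by positivity) (by positivity),
    log_mul (by positivity) (by positivity), log_pow, log_pow, log_prod_prod_factorial,
    log_prod_prod_factorial _ _ (k ·)]
  push_cast
  ring

theorem mul_div_mul_log_div (x : ℝ) {y : ℝ} (hy : y ≠ 0) :
    y * (x / y * log (x / y)) = x * log x - x * log y := by
  rcases eq_or_ne x 0 with rfl | hx
  · simp
  rw [log_div hx hy]
  field_simp

namespace isDS

variable {M n : ℕ} {k : Matrix (Fin n) (Fin n) ℕ}

theorem le (hk : isDS M n k) (i j : Fin n) : k i j ≤ M :=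
  hk.1 i ▸ Finset.single_le_sum (fun _ _ => Nat.zero_le _) (Finset.mem_univ j)

theorem sum_sub_sub_sum (hk : isDS M n k) :
    ∑ i, ∑ j, ((M - k i j : ℕ) : ℝ) - ∑ i, ∑ j, (k i j : ℝ) = (n ^ 2 - 2 * n : ℝ) * M := by
  have hrow : ∀ i, ∑ j, (k i j : ℝ) = M := fun i => by exact_mod_cast hk.1 i
  simp only [Nat.cast_sub (hk.le _ _), Finset.sum_sub_distrib, hrow]
  simp only [Finset.sum_const, Finset.card_univ, Fintype.card_fin, nsmul_eq_mul]
  ring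

theorem mul_entropy_eq (hM : M ≠ 0) (hk : isDS M n k) :
    (M : ℝ) * (-(∑ i, ∑ j, ((k i j : ℝ) / M) * log ((k i j : ℝ) / M)) +
        ∑ i, ∑ j, (1 - (k i j : ℝ) / M) * log (1 - (k i j : ℝ) / M)) =
      (2 * n - n ^ 2 : ℝ) * (M * log M) +
        ∑ i, ∑ j, ((M - k i j : ℕ) : ℝ) * log (M - k i j : ℕ) - ∑ i, ∑ j, k i j * log (k i j) := by
  have hM' : (M : ℝ) ≠ 0 := Nat.cast_ne_zero.mpr hM
  have h_compl : ∀ i j, 1 - (k i j : ℝ) / M = ((M - k i j : ℕ) : ℝ) / M := fun i j => by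
    rw [Nat.cast_sub (hk.le i j)]
    field_simp
  simp only [h_compl, mul_add, mul_neg, Finset.mul_sum, mul_div_mul_log_div _ hM',
    Finset.sum_sub_distrib, ← Finset.sum_mul]
  linear_combination -log M * hk.sum_sub_sub_sum

end isDS

theorem statement_12_general (n N : ℕ) (hN : 1 ≤ N)
    (k : Matrix (Fin n) (Fin n) ℕ) (hk : isDS N n k) :
    Filter.Tendsto
      (fun t : ℕ =>
        Real.log (CB (t * N) n (Matrix.of fun i j => t * k i j)) / ((t * N : ℕ) : ℝ))
      Filter.atTop
      (nhds (-(∑ i, ∑ j, ((k i j : ℝ) / N) * Real.log ((k i j : ℝ) / N)) +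
        ∑ i, ∑ j, (1 - (k i j : ℝ) / N) * Real.log (1 - (k i j : ℝ) / N))) := by
  have hN0 : N ≠ 0 := Nat.one_le_iff_ne_zero.mp hN
  have hN' : (N : ℝ) ≠ 0 := Nat.cast_ne_zero.mpr hN0
  have h_lim := (((tendsto_scaledLogFactorial N).const_mul (2 * n - n ^ 2 : ℝ)).add
    (tendsto_finsetSum Finset.univ fun i _ => tendsto_finsetSum Finset.univ fun j _ =>
      tendsto_scaledLogFactorial (N - k i j))).sub
    (tendsto_finsetSum Finset.univ fun i _ => tendsto_finsetSum Finset.univ fun j _ =>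
      tendsto_scaledLogFactorial (k i j)) |>.div_const (N : ℝ)
  rw [← hk.mul_entropy_eq hN0, mul_div_cancel_left₀ _ hN'] at h_lim
  refine h_lim.congr' ?_
  filter_upwards [eventually_ne_atTop 0] with t ht
  have ht' : (t : ℝ) ≠ 0 := Nat.cast_ne_zero.mpr ht
  simp only [log_CB, Matrix.of_apply, ← Nat.mul_sub, log_factorial_mul ht, Finset.sum_add_distrib,
    ← Finset.mul_sum]
  push_cast
  field_simp
  linear_combination (1 - log t) * hk.sum_sub_sub_sum

/-- Fix `n, N ≥ 1` and `k ∈ K(N,n)` and let `γ(i,j) = k(i,j)/N`. Then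
`log(C_{B,tN,n}(t·k))/(tN) → H_B(γ)` as `t → ∞`, where
`H_B(γ) = −Σ_{i,j} γ(i,j)·log γ(i,j) + Σ_{i,j} (1−γ(i,j))·log(1−γ(i,j))`
(in Lean, `Real.log 0 = 0` realizes the convention `0·log 0 = 0`). -/
theorem statement_12 (n N : ℕ) (hn : 1 ≤ n) (hN : 1 ≤ N)
    (k : Matrix (Fin n) (Fin n) ℕ) (hk : isDS N n k) :
    Filter.Tendsto
      (fun t : ℕ =>
        Real.log (CB (t * N) n (Matrix.of fun i j => t * k i j)) / ((t * N : ℕ) : ℝ))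
      Filter.atTop
      (nhds (-(∑ i, ∑ j, ((k i j : ℝ) / N) * Real.log ((k i j : ℝ) / N)) +
        ∑ i, ∑ j, (1 - (k i j : ℝ) / N) * Real.log (1 - (k i j : ℝ) / N))) :=
  statement_12_general n N hN k hk
end
end

section
/- Let n ≥ 1 and let σ_1, σ_2 ∈ S_n. Then the number of ordered pairs (τ_1, τ_2) ∈ S_n × S_n with P_{τ_1} + P_{τ_2} = P_{σ_1} + P_{σ_2} equals 2^{c(σ_1,σ_2)}, where c(σ_1,σ_2) denotes the number of cycles of length at least 2 in the cycle decomposition of the permutation σ_1∘σ_2^{−1}. -/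
open scoped BigOperators

noncomputable section

theorem ite_add_ite_eq_ite_add_ite_iff {α : Type*} [DecidableEq α] {a b c d : α} :
    (∀ j, (if a = j then 1 else 0) + (if b = j then 1 else 0) =
        (if c = j then (1 : ℕ) else 0) + (if d = j then 1 else 0)) ↔
      (a = c ∧ b = d) ∨ (a = d ∧ b = c) := by
  refine ⟨fun h => ?_, ?_⟩
  · by_cases hac : a = c
    · have hb := h b
      subst hac
      split_ifs at hb <;> simp_all
    · have hc := h c
      have ha := h a
      split_ifs at hc ha <;> simp_all
  · rintro (⟨rfl, rfl⟩ | ⟨rfl, rfl⟩) j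
    · rfl
    · exact add_comm _ _

theorem permMat_add_permMat_eq_iff {n : ℕ} {τ₁ τ₂ σ₁ σ₂ : Equiv.Perm (Fin n)} :
    permMat τ₁ + permMat τ₂ = permMat σ₁ + permMat σ₂ ↔
      ∀ i, (τ₁ i = σ₁ i ∧ τ₂ i = σ₂ i) ∨ (τ₁ i = σ₂ i ∧ τ₂ i = σ₁ i) := by
  simp only [← ite_add_ite_eq_ite_add_ite_iff, ← Matrix.ext_iff]
  rfl

namespace Equiv.Perm

variable {α : Type*}

theorem apply_apply_eq_of_forall_apply_eq_or {τ π : Perm α} (h : ∀ x, τ x = x ∨ τ x = π x)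
    {y : α} (hy : τ y = y) : τ (π y) = π y := by
  obtain ⟨z, hz⟩ := τ.surjective (π y)
  rcases h z with hzz | hzπ
  · rw [← hz, hzz, hzz]
  · obtain rfl : z = y := π.injective (hzπ.symm.trans hz)
    rw [← hz, hy, hy]

theorem pointwiseSwap_snd_unique {σ₁ σ₂ τ₁ τ₂ τ₂' : Perm α}
    (h : ∀ i, (τ₁ i = σ₁ i ∧ τ₂ i = σ₂ i) ∨ (τ₁ i = σ₂ i ∧ τ₂ i = σ₁ i))
    (h' : ∀ i, (τ₁ i = σ₁ i ∧ τ₂' i = σ₂ i) ∨ (τ₁ i = σ₂ i ∧ τ₂' i = σ₁ i)) : τ₂ = τ₂' := by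
  ext i
  rcases h i with ⟨h1, h2⟩ | ⟨h1, h2⟩ <;> rcases h' i with ⟨h1', h2'⟩ | ⟨h1', h2'⟩ <;>
    simp_all

/-- The pair is recovered as `(τ * σ₂, τ⁻¹ * σ₁)`. -/
def pointwiseSwapEquiv (σ₁ σ₂ : Perm α) :
    {p : Perm α × Perm α //
        ∀ i, (p.1 i = σ₁ i ∧ p.2 i = σ₂ i) ∨ (p.1 i = σ₂ i ∧ p.2 i = σ₁ i)} ≃
      {τ : Perm α // ∀ x, τ x = x ∨ τ x = (σ₁ * σ₂⁻¹) x} := by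
  refine .ofBijective (fun p => ⟨p.1.1 * σ₂⁻¹, fun x => ?_⟩) ⟨?_, fun τ => ?_⟩
  · rw [Perm.mul_apply, Perm.mul_apply]
    rcases p.2 (σ₂⁻¹ x) with ⟨h, -⟩ | ⟨h, -⟩
    · exact .inr h
    · exact .inl (h.trans (σ₂.apply_symm_apply x))
  · rintro ⟨⟨τ₁, τ₂⟩, h⟩ ⟨⟨τ₁', τ₂'⟩, h'⟩ hτ
    obtain rfl : τ₁ = τ₁' := mul_right_cancel (congrArg Subtype.val hτ)
    obtain rfl : τ₂ = τ₂' := pointwiseSwap_snd_unique h h'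
    rfl
  · refine ⟨⟨(τ.1 * σ₂, τ.1⁻¹ * σ₁), fun i => ?_⟩, Subtype.ext (mul_inv_cancel_right _ _)⟩
    have hσ : (σ₁ * σ₂⁻¹) (σ₂ i) = σ₁ i := congrArg σ₁ (σ₂.symm_apply_apply i)
    simp only [Perm.mul_apply, Perm.inv_eq_iff_eq]
    rcases τ.2 (σ₂ i) with h | h
    · have h' := apply_apply_eq_of_forall_apply_eq_or τ.2 h
      rw [hσ] at h'
      exact .inr ⟨h, h'.symm⟩
    · rw [hσ] at h
      exact .inl ⟨h, h.symm⟩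

variable [Fintype α] [DecidableEq α] {τ π : Perm α}

theorem cycleFactorsFinset_subset_iff :
    τ.cycleFactorsFinset ⊆ π.cycleFactorsFinset ↔ ∀ x, τ x = x ∨ τ x = π x := by
  constructor
  · intro h x
    refine or_iff_not_imp_left.mpr fun hx => ?_
    have hx : x ∈ τ.support := mem_support.mpr hx
    have hc := h (cycleOf_mem_cycleFactorsFinset_iff.mpr hx)
    rw [← cycleOf_apply_self]
    exact (mem_cycleFactorsFinset_iff.mp hc).2 x (mem_support_cycleOf_iff.mpr ⟨.refl _ _, hx⟩)
  · intro h c hc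
    obtain ⟨hcyc, hcτ⟩ := mem_cycleFactorsFinset_iff.mp hc
    refine mem_cycleFactorsFinset_iff.mpr ⟨hcyc, fun x hx => ?_⟩
    have hτx : τ x ≠ x := mem_support.mp (mem_cycleFactorsFinset_support_le hc hx)
    exact (hcτ x hx).trans ((h x).resolve_left hτx)

theorem exists_cycleFactorsFinset_eq {s : Finset (Perm α)} (hs : s ⊆ π.cycleFactorsFinset) :
    ∃ τ : Perm α, τ.cycleFactorsFinset = s := by
  have hdisj : (s : Set (Perm α)).Pairwise Disjoint :=
    π.cycleFactorsFinset_pairwise_disjoint.mono (by exact_mod_cast hs)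
  exact ⟨_, cycleFactorsFinset_eq_finset.mpr
    ⟨fun f hf => (mem_cycleFactorsFinset_iff.mp (hs hf)).1, hdisj, rfl⟩⟩

theorem card_cycleFactorsFinset_subset (π : Perm α) :
    Nat.card {τ : Perm α // τ.cycleFactorsFinset ⊆ π.cycleFactorsFinset} =
      2 ^ Multiset.card π.cycleType := by
  have e : {τ : Perm α // τ.cycleFactorsFinset ⊆ π.cycleFactorsFinset} ≃
      π.cycleFactorsFinset.powerset :=
    .ofBijective (fun τ => ⟨τ.1.cycleFactorsFinset, Finset.mem_powerset.mpr τ.2⟩)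
      ⟨fun τ₁ τ₂ h => Subtype.ext (cycleFactorsFinset_injective (congrArg Subtype.val h)),
        fun s => (exists_cycleFactorsFinset_eq (Finset.mem_powerset.mp s.2)).elim
          fun τ hτ => ⟨⟨τ, hτ ▸ Finset.mem_powerset.mp s.2⟩, Subtype.ext hτ⟩⟩
  rw [Nat.card_congr e, Nat.card_eq_fintype_card, Fintype.card_coe, Finset.card_powerset,
    cycleType_def, Multiset.card_map]
  rfl

end Equiv.Perm

theorem statement_17_general (n : ℕ) (σ₁ σ₂ : Equiv.Perm (Fin n)) :
    Nat.card {p : Equiv.Perm (Fin n) × Equiv.Perm (Fin n) //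
        permMat p.1 + permMat p.2 = permMat σ₁ + permMat σ₂} =
      2 ^ Multiset.card (σ₁ * σ₂⁻¹).cycleType := by
  calc _ = Nat.card {p : Equiv.Perm (Fin n) × Equiv.Perm (Fin n) //
          ∀ i, (p.1 i = σ₁ i ∧ p.2 i = σ₂ i) ∨ (p.1 i = σ₂ i ∧ p.2 i = σ₁ i)} :=
        Nat.card_congr (.subtypeEquivRight fun _ => permMat_add_permMat_eq_iff)
    _ = Nat.card {τ : Equiv.Perm (Fin n) // ∀ x, τ x = x ∨ τ x = (σ₁ * σ₂⁻¹) x} :=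
        Nat.card_congr (Equiv.Perm.pointwiseSwapEquiv σ₁ σ₂)
    _ = Nat.card {τ : Equiv.Perm (Fin n) //
          τ.cycleFactorsFinset ⊆ (σ₁ * σ₂⁻¹).cycleFactorsFinset} :=
        Nat.card_congr <|
          .subtypeEquivRight fun _ => Equiv.Perm.cycleFactorsFinset_subset_iff.symm
    _ = 2 ^ Multiset.card (σ₁ * σ₂⁻¹).cycleType :=
        Equiv.Perm.card_cycleFactorsFinset_subset _

/-- For `n ≥ 1` and permutations `σ_1, σ_2` of `{1,…,n}`, the number of
ordered pairs `(τ_1,τ_2)` of permutations with `P_{τ_1} + P_{τ_2} = P_{σ_1} + P_{σ_2}`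
equals `2^{c(σ_1,σ_2)}`, where `c(σ_1,σ_2)` is the number of cycles of length at least `2`
of `σ_1∘σ_2⁻¹` (the number of entries of its cycle type). -/
theorem statement_17 (n : ℕ) (hn : 1 ≤ n) (σ₁ σ₂ : Equiv.Perm (Fin n)) :
    Nat.card {p : Equiv.Perm (Fin n) × Equiv.Perm (Fin n) //
        permMat p.1 + permMat p.2 = permMat σ₁ + permMat σ₂} =
      2 ^ Multiset.card (σ₁ * σ₂⁻¹).cycleType :=
  statement_17_general n σ₁ σ₂
end
end

section
/- Let ι be a finite index set and for each i ∈ ι let X_i be a nonempty finite type. Let C be a complex matrix indexed by the product type Π_{i∈ι} X_i that is positive semidefinite (i.e., Hermitian with x^H C x ≥ 0 for all complex vectors x), and for each i ∈ ι let A_i be a positive semidefinite complex matrix indexed by X_i. Then the complex number Σ_{x, x' ∈ Π_i X_i} C(x, x') · ∏_{i∈ι} A_i(x(i), x'(i)) is real and nonnegative (its imaginary part is zero and its real part is ≥ 0). -/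
open scoped BigOperators

noncomputable section

open scoped ComplexOrder

/-!
Factor each `A i = Bᵢᴴ Bᵢ`; then the matrix `K x x' = ∏ i, A i (x i) (x' i)` factors as `Bᴴ B`
with `B κ x = ∏ i, Bᵢ (κ i) (x i)`, so `K` is positive semidefinite. The sum is `1ᴴ (C ⊙ K) 1`,
which is nonnegative by the Schur product theorem.
-/

namespace Matrix

variable {ι : Type*} [Fintype ι] {X Y Z : ι → Type*}

def piKronecker {R : Type*} [CommMonoid R] (A : ∀ i, Matrix (X i) (Y i) R) :
    Matrix (∀ i, X i) (∀ i, Y i) R :=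
  of fun x y => ∏ i, A i (x i) (y i)

theorem piKronecker_mul {R : Type*} [CommSemiring R] [DecidableEq ι] [∀ i, Fintype (Y i)]
    (A : ∀ i, Matrix (X i) (Y i) R) (B : ∀ i, Matrix (Y i) (Z i) R) :
    piKronecker (fun i => A i * B i) = piKronecker A * piKronecker B := by
  ext x z
  simp only [piKronecker, of_apply, mul_apply, Fintype.prod_sum, ← Finset.prod_mul_distrib]

theorem conjTranspose_piKronecker {R : Type*} [CommSemiring R] [StarRing R]
    (A : ∀ i, Matrix (X i) (Y i) R) :
    (piKronecker A)ᴴ = piKronecker fun i => (A i)ᴴ := by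
  ext y x
  simp only [piKronecker, conjTranspose_apply, of_apply, star_prod]

theorem PosSemidef.piKronecker {𝕜 : Type*} [RCLike 𝕜] [DecidableEq ι] [∀ i, Fintype (X i)]
    {A : ∀ i, Matrix (X i) (X i) 𝕜} (hA : ∀ i, (A i).PosSemidef) :
    (piKronecker A).PosSemidef := by
  classical
  open scoped MatrixOrder in
  choose B hB using fun i => CStarAlgebra.nonneg_iff_eq_star_mul_self.mp (hA i).nonneg
  have hA' : A = fun i => (B i)ᴴ * B i := funext hB
  rw [hA', piKronecker_mul, ← conjTranspose_piKronecker]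
  exact posSemidef_conjTranspose_mul_self _

theorem PosSemidef.sum_sum_nonneg {R n : Type*} [Ring R] [PartialOrder R] [StarRing R]
    [Fintype n] {M : Matrix n n R} (hM : M.PosSemidef) : 0 ≤ ∑ i, ∑ j, M i j := by
  simpa [dotProduct, mulVec, Finset.mul_sum] using hM.dotProduct_mulVec_nonneg 1

end Matrix

theorem statement_19_general (ι : Type*) [Fintype ι] [DecidableEq ι]
    (X : ι → Type*) [∀ i, Fintype (X i)]
    (C : Matrix (∀ i, X i) (∀ i, X i) ℂ) (hC : C.PosSemidef)
    (A : ∀ i, Matrix (X i) (X i) ℂ) (hA : ∀ i, (A i).PosSemidef) :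
    (∑ x : ∀ i, X i, ∑ x' : ∀ i, X i, C x x' * ∏ i, A i (x i) (x' i)).im = 0 ∧
      0 ≤ (∑ x : ∀ i, X i, ∑ x' : ∀ i, X i, C x x' * ∏ i, A i (x i) (x' i)).re := by
  have h : 0 ≤ ∑ x : ∀ i, X i, ∑ x' : ∀ i, X i, C x x' * ∏ i, A i (x i) (x' i) :=
    (hC.hadamard (Matrix.PosSemidef.piKronecker hA)).sum_sum_nonneg
  obtain ⟨hre, him⟩ := Complex.nonneg_iff.mp h
  exact ⟨him.symm, hre⟩

/-- Let `ι` be a finite index set, `X i` nonempty finite types, `C` a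
positive semidefinite complex matrix indexed by `Π i, X i` (i.e. Hermitian with
`x^H C x ≥ 0` for all complex vectors `x`, which is `Matrix.PosSemidef`), and `A i` positive
semidefinite complex matrices indexed by `X i`. Then
`Σ_{x,x'} C(x,x') · ∏_i A_i(x(i), x'(i))` is a nonnegative real number: its imaginary part
is zero and its real part is nonnegative. -/
theorem statement_19 (ι : Type*) [Fintype ι] [DecidableEq ι]
    (X : ι → Type*) [∀ i, Fintype (X i)] [∀ i, Nonempty (X i)]
    (C : Matrix (∀ i, X i) (∀ i, X i) ℂ) (hC : C.PosSemidef)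
    (A : ∀ i, Matrix (X i) (X i) ℂ) (hA : ∀ i, (A i).PosSemidef) :
    (∑ x : ∀ i, X i, ∑ x' : ∀ i, X i, C x x' * ∏ i, A i (x i) (x' i)).im = 0 ∧
      0 ≤ (∑ x : ∀ i, X i, ∑ x' : ∀ i, X i, C x x' * ∏ i, A i (x i) (x' i)).re :=
  statement_19_general ι X C hC A hA
end
end
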